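/- arXiv:1701.00889 — 3 statements merged into one kernel-verified Lean document; each statement's English description precedes it below -/
import Mathlib

section
/- Fix d ∈ ℕ and T > 0. With M = M(N) such that M/N → T as N → ∞ (e.g., M = ⌊NT⌋), the limit as N → ∞ of C(M+N-d-2, N-2) / C(M+N-1, N-1) equals (1/(T+1))·(T/(T+1))^d, the geometric distribution with success probability 1/(T+1). -/
/-!
Once `d ≤ M`, peeling off one factor of the binomial ratio at a time gives
`C(M+N-d-2, N-2) / C(M+N-1, N-1) = (N-1)/(M+N-1) · ∏_{i<d} (M-i)/(M+N-2-i)`.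
Each factor is a quotient of affine functions of `M` and `N`, so `M/N → T` sends the first to
`1/(T+1)` and the other `d` to `T/(T+1)`; `T > 0` forces `M → ∞`, so `d ≤ M` holds eventually.
-/

open Filter Finset Topology

theorem choose_div_choose_succ (j k : ℕ) :
    ((j + k).choose k : ℝ) / (j + 1 + k).choose k = (j + 1) / (j + 1 + k) := by
  have h := Nat.choose_mul_succ_eq (j + k) k
  rw [show j + k + 1 - k = j + 1 by omega, show j + k + 1 = j + 1 + k by omega] at h
  have hpos : ((j + 1 + k).choose k : ℝ) ≠ 0 := by
    exact_mod_cast (Nat.choose_pos (by omega)).ne'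
  rw [div_eq_div_iff hpos (by positivity)]
  exact_mod_cast h.trans (mul_comm _ _)

theorem choose_div_choose_succ_succ (j k : ℕ) :
    ((j + k).choose k : ℝ) / (j + k + 1).choose (k + 1) = (k + 1) / (j + k + 1) := by
  have h := Nat.add_one_mul_choose_eq (j + k) k
  have hpos : ((j + k + 1).choose (k + 1) : ℝ) ≠ 0 := by
    exact_mod_cast (Nat.choose_pos (by omega)).ne'
  rw [div_eq_div_iff hpos (by positivity), mul_comm]
  exact_mod_cast h.trans (mul_comm _ _)

theorem choose_div_choose_eq_mul_prod (m k d : ℕ) (hd : d ≤ m) :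
    ((m + k - d).choose k : ℝ) / (m + k + 1).choose (k + 1)
      = (k + 1) / (m + k + 1) * ∏ i ∈ range d, ((m : ℝ) - i) / (m + k - i) := by
  induction d with
  | zero => simpa using choose_div_choose_succ_succ m k
  | succ d ih =>
    obtain ⟨j, rfl⟩ : ∃ j, m = j + d + 1 := ⟨m - d - 1, by omega⟩
    have hpos : ((j + 1 + k).choose k : ℝ) ≠ 0 := by
      exact_mod_cast (Nat.choose_pos (by omega)).ne'
    rw [prod_range_succ, ← mul_assoc, ← ih (by omega),
      show j + d + 1 + k - (d + 1) = j + k by omega, show j + d + 1 + k - d = j + 1 + k by omega,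
      ← div_mul_div_cancel₀ hpos, choose_div_choose_succ j k, mul_comm]
    push_cast
    ring

theorem choose_sub_two_div_choose_sub_one_eq_mul_prod (m n d : ℕ) (hd : d ≤ m) (hn : 2 ≤ n) :
    ((m + n - d - 2).choose (n - 2) : ℝ) / (m + n - 1).choose (n - 1)
      = ((n : ℝ) - 1) / (m + n - 1) * ∏ i ∈ range d, ((m : ℝ) - i) / (m + n - 2 - i) := by
  obtain ⟨k, rfl⟩ : ∃ k, n = k + 2 := ⟨n - 2, by omega⟩
  rw [show m + (k + 2) - d - 2 = m + k - d by omega, show m + (k + 2) - 1 = m + k + 1 by omega,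
    show k + 2 - 2 = k by omega, show k + 2 - 1 = k + 1 by omega,
    choose_div_choose_eq_mul_prod m k d hd]
  push_cast
  ring_nf

theorem tendsto_atTop_of_tendsto_div_natCast {x : ℕ → ℝ} {T : ℝ} (hT : 0 < T)
    (hx : Tendsto (fun N ↦ x N / N) atTop (𝓝 T)) : Tendsto x atTop atTop := by
  refine (hx.pos_mul_atTop hT tendsto_natCast_atTop_atTop).congr' ?_
  filter_upwards [eventually_ne_atTop 0] with N hN
  field_simp

theorem tendsto_affine_div_affine {x : ℕ → ℝ} {T : ℝ}
    (hx : Tendsto (fun N ↦ x N / N) atTop (𝓝 T)) (hT : T + 1 ≠ 0) (p q a b : ℝ) :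
    Tendsto (fun N ↦ (p * x N + q * N + a) / (x N + N + b)) atTop
      (𝓝 ((p * T + q) / (T + 1))) := by
  have hinv : Tendsto (fun N : ℕ ↦ (N : ℝ)⁻¹) atTop (𝓝 0) :=
    tendsto_inv_atTop_zero.comp tendsto_natCast_atTop_atTop
  have hnum :
      Tendsto (fun N ↦ p * (x N / N) + q + a * (N : ℝ)⁻¹) atTop (𝓝 (p * T + q)) := by
    simpa using ((hx.const_mul p).add_const q).add (hinv.const_mul a)
  have hden : Tendsto (fun N ↦ x N / N + 1 + b * (N : ℝ)⁻¹) atTop (𝓝 (T + 1)) := by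
    simpa using (hx.add_const 1).add (hinv.const_mul b)
  refine (hnum.div hden hT).congr' ?_
  filter_upwards [eventually_ne_atTop 0] with N hN
  have hN' : (N : ℝ) ≠ 0 := Nat.cast_ne_zero.mpr hN
  rw [Pi.div_apply, ← mul_div_mul_right _ _ hN']
  congr 1 <;> field_simp

/-- Large population limit: if `M N / N → T > 0`, then the stationary probability that a
fixed agent owns `d` dollars, `C(M+N-d-2, N-2)/C(M+N-1, N-1)`, converges to the geometric
distribution `(1/(T+1))·(T/(T+1))^d`. -/
theorem choose_ratio_tendsto_geometric (d : ℕ) (T : ℝ) (hT : 0 < T) (M : ℕ → ℕ)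
    (hM : Tendsto (fun N => (M N : ℝ) / N) atTop (nhds T)) :
    Tendsto
      (fun N => ((M N + N - d - 2).choose (N - 2) : ℝ) / ((M N + N - 1).choose (N - 1)))
      atTop (nhds ((1 / (T + 1)) * (T / (T + 1)) ^ d)) := by
  have hMd : ∀ᶠ N in atTop, d ≤ M N :=
    ((tendsto_atTop_of_tendsto_div_natCast hT hM).eventually_ge_atTop d).mono
      fun N h ↦ by exact_mod_cast h
  have hT1 : T + 1 ≠ 0 := by positivity
  have hfirst :
      Tendsto (fun N : ℕ ↦ ((N : ℝ) - 1) / (M N + N - 1)) atTop (𝓝 (1 / (T + 1))) := by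
    convert tendsto_affine_div_affine hM hT1 0 1 (-1) (-1) using 2 <;> ring
  have hfactor (i : ℕ) :
      Tendsto (fun N ↦ ((M N : ℝ) - i) / (M N + N - 2 - i)) atTop (𝓝 (T / (T + 1))) := by
    convert tendsto_affine_div_affine hM hT1 1 0 (-i) (-2 - i) using 2 <;> ring
  have hprod := tendsto_finsetProd (range d) fun i _ ↦ hfactor i
  rw [prod_const, card_range] at hprod
  refine (hfirst.mul hprod).congr' ?_
  filter_upwards [hMd, eventually_ge_atTop 2] with N hd hN
  exact (choose_sub_two_div_choose_sub_one_eq_mul_prod (M N) N d hd hN).symm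
end

section
/- The multinomial distribution π(ξ) = (M choose ξ(x_1),…,ξ(x_N)) · ∏_{w∈V} (deg(w)/∑_{z∈V} deg(z))^{ξ(w)} on 𝒜_{N,M} is reversible (hence stationary) for the Model 2 Markov chain: π(ξ)p(ξ,ξ') = π(ξ')p(ξ',ξ) for all ξ, ξ'. -/
/-- The result of moving one dollar from `x` to `y` in configuration `ξ`
(nothing happens if `ξ x = 0`). -/
def moveDollar {V : Type*} [DecidableEq V] (ξ : V → ℕ) (x y : V) : V → ℕ :=
  fun z => if ξ x = 0 then ξ z
    else ξ z - (if z = x then 1 else 0) + (if z = y then 1 else 0)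


/-- Model 2 transition probabilities: `p(ξ, ξ^{→xy}) = ξ(x)/(M·deg(x))` for each
oriented edge `(x,y)`. -/
def pTwo {V : Type*} [Fintype V] [DecidableEq V] (G : SimpleGraph V) [DecidableRel G.Adj]
    (M : ℕ) (ξ ξ' : V → ℕ) : ℚ :=
  ∑ e ∈ Finset.univ.filter (fun e : V × V => G.Adj e.1 e.2 ∧ moveDollar ξ e.1 e.2 = ξ'),
    (ξ e.1 : ℚ) / ((M : ℚ) * (G.degree e.1 : ℚ))

/-- The multinomial distribution on `𝒜_{N,M}` with marginal weights
`π̄(w) = deg(w)/∑_z deg(z)`. -/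
def piMulti {V : Type*} [Fintype V] [DecidableEq V] (G : SimpleGraph V)
    [DecidableRel G.Adj] (ξ : V → ℕ) : ℚ :=
  (Nat.multinomial Finset.univ ξ : ℚ)
    * ∏ w, ((G.degree w : ℚ) / (∑ z, (G.degree z : ℚ))) ^ ξ w

/-!
A transition along the oriented edge `(x, y)` goes from `η + δ_x` to `η + δ_y`, where `η` is the
configuration with the moving dollar removed. Since
`multinomial (η + δ_z) * (η z + 1) = (|η| + 1) * multinomial η` and `π̄ z / deg z` does not depend
on `z`, the probability flow `π(η + δ_x) * (η x + 1) / (M deg x)` along that edge equals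
`(|η| + 1) π(η) / (M ∑ deg)`, which is symmetric in `x` and `y`. Reversing every oriented edge
thus matches `π(ξ) p(ξ, ξ')` with `π(ξ') p(ξ', ξ)` term by term.
-/

open Finset
open scoped Nat

section MultinomialAddSingle

variable {V : Type*} [DecidableEq V] {s : Finset V} {z : V}

theorem prod_apply_add_single_one {β : Type*} [CommMonoid β] (f : V → ℕ → β) (η : V → ℕ)
    (hz : z ∈ s) :
    ∏ w ∈ s, f w ((η + Pi.single z 1 : V → ℕ) w)
      = f z (η z + 1) * ∏ w ∈ s.erase z, f w (η w) := by
  rw [← mul_prod_erase s _ hz]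
  congr 1
  · simp
  · exact prod_congr rfl fun w hw => by simp [(mem_erase.1 hw).1]

theorem sum_add_single_one (η : V → ℕ) (hz : z ∈ s) :
    ∑ w ∈ s, (η + Pi.single z 1 : V → ℕ) w = ∑ w ∈ s, η w + 1 := by
  simp only [Pi.add_apply, sum_add_distrib, sum_pi_single', if_pos hz]

theorem prod_factorial_add_single_one (η : V → ℕ) (hz : z ∈ s) :
    ∏ w ∈ s, ((η + Pi.single z 1 : V → ℕ) w)! = (η z + 1) * ∏ w ∈ s, (η w)! := by
  rw [prod_apply_add_single_one (fun _ n => n !) η hz, ← mul_prod_erase s _ hz,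
    Nat.factorial_succ, mul_assoc]

theorem prod_pow_add_single_one {R : Type*} [CommMonoid R] (p : V → R) (η : V → ℕ)
    (hz : z ∈ s) :
    ∏ w ∈ s, p w ^ (η + Pi.single z 1 : V → ℕ) w = p z * ∏ w ∈ s, p w ^ η w := by
  rw [prod_apply_add_single_one (fun w n => p w ^ n) η hz, ← mul_prod_erase s _ hz, pow_succ,
    mul_comm (p z ^ η z) (p z), mul_assoc]

theorem multinomial_add_single_one_mul (η : V → ℕ) (hz : z ∈ s) :
    Nat.multinomial s (η + Pi.single z 1) * (η z + 1)
      = (∑ w ∈ s, η w + 1) * Nat.multinomial s η := by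
  have hspec := Nat.multinomial_spec s (η + Pi.single z 1)
  rw [prod_factorial_add_single_one η hz, sum_add_single_one η hz, Nat.factorial_succ,
    ← Nat.multinomial_spec s η] at hspec
  have hpos : 0 < ∏ w ∈ s, (η w)! := prod_pos fun w _ => Nat.factorial_pos _
  apply Nat.eq_of_mul_eq_mul_left hpos
  linear_combination hspec

end MultinomialAddSingle

section MoveDollar

variable {V : Type*} [DecidableEq V]

theorem moveDollar_add_single (η : V → ℕ) (x y : V) :
    moveDollar (η + Pi.single x 1) x y = η + Pi.single y 1 := by
  funext z
  by_cases hzx : z = x <;> by_cases hzy : z = y <;> simp_all [moveDollar]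

theorem exists_eq_add_single {ξ : V → ℕ} {x : V} (hx : ξ x ≠ 0) :
    ∃ η : V → ℕ, ξ = η + Pi.single x 1 := by
  refine ⟨ξ - Pi.single x 1, funext fun z => ?_⟩
  by_cases hzx : z = x
  · subst hzx
    simp only [Pi.add_apply, Pi.sub_apply, Pi.single_eq_same]
    omega
  · simp [hzx]

end MoveDollar

section Reversibility

variable {V : Type*} [Fintype V] [DecidableEq V] (G : SimpleGraph V) [DecidableRel G.Adj]
  (M : ℕ)

theorem piMulti_add_single_mul_rate (η : V → ℕ) {z : V} (hz : G.degree z ≠ 0) :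
    piMulti G (η + Pi.single z 1)
        * ((η + Pi.single z 1 : V → ℕ) z / ((M : ℚ) * (G.degree z : ℚ)))
      = (∑ w, η w + 1) * piMulti G η / (M * ∑ w, (G.degree w : ℚ)) := by
  have hmult : (Nat.multinomial univ (η + Pi.single z 1) : ℚ) * (η z + 1)
      = (∑ w, η w + 1) * Nat.multinomial univ η := by
    exact_mod_cast multinomial_add_single_one_mul η (mem_univ z)
  have hdeg : (G.degree z : ℚ) ≠ 0 := Nat.cast_ne_zero.2 hz
  unfold piMulti
  rw [prod_pow_add_single_one _ η (mem_univ z)]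
  simp only [Pi.add_apply, Pi.single_eq_same, Nat.cast_add, Nat.cast_one]
  set P := ∏ w, ((G.degree w : ℚ) / ∑ v, (G.degree v : ℚ)) ^ η w
  calc _ = (Nat.multinomial univ (η + Pi.single z 1) : ℚ) * (η z + 1) * P
        * ((G.degree z : ℚ) / G.degree z) / (M * ∑ w, (G.degree w : ℚ)) := by ring
    _ = _ := by rw [hmult, div_self hdeg]; ring

def edgeFlow (ξ ξ' : V → ℕ) (x y : V) : ℚ :=
  if G.Adj x y ∧ moveDollar ξ x y = ξ' then piMulti G ξ * (ξ x / ((M : ℚ) * G.degree x)) else 0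

theorem piMulti_mul_pTwo (ξ ξ' : V → ℕ) :
    piMulti G ξ * pTwo G M ξ ξ' = ∑ e : V × V, edgeFlow G M ξ ξ' e.1 e.2 := by
  rw [pTwo, mul_sum, sum_filter]
  rfl

theorem edgeFlow_add_single {x y : V} (h : G.Adj x y) (η : V → ℕ) :
    edgeFlow G M (η + Pi.single x 1) (η + Pi.single y 1) x y
      = (∑ w, η w + 1) * piMulti G η / (M * ∑ w, (G.degree w : ℚ)) := by
  rw [edgeFlow, if_pos ⟨h, moveDollar_add_single η x y⟩]
  exact piMulti_add_single_mul_rate G M η h.degree_pos_left.ne'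

variable {G M} {ξ ξ' : V → ℕ} {x y : V}

theorem edgeFlow_eq_zero (h : ¬(G.Adj x y ∧ moveDollar ξ x y = ξ' ∧ ξ x ≠ 0)) :
    edgeFlow G M ξ ξ' x y = 0 := by
  unfold edgeFlow
  split_ifs with hmove
  · rw [show ξ x = 0 by tauto, Nat.cast_zero, zero_div, mul_zero]
  · rfl

theorem edgeFlow_swap_of_ne_zero (hadj : G.Adj x y) (hmove : moveDollar ξ x y = ξ')
    (hx : ξ x ≠ 0) : edgeFlow G M ξ ξ' x y = edgeFlow G M ξ' ξ y x := by
  obtain ⟨η, rfl⟩ := exists_eq_add_single hx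
  subst hmove
  rw [moveDollar_add_single, edgeFlow_add_single G M hadj, edgeFlow_add_single G M hadj.symm]

theorem edgeFlow_swap : edgeFlow G M ξ ξ' x y = edgeFlow G M ξ' ξ y x := by
  by_cases hxy : G.Adj x y ∧ moveDollar ξ x y = ξ' ∧ ξ x ≠ 0
  · exact edgeFlow_swap_of_ne_zero hxy.1 hxy.2.1 hxy.2.2
  by_cases hyx : G.Adj y x ∧ moveDollar ξ' y x = ξ ∧ ξ' y ≠ 0
  · exact (edgeFlow_swap_of_ne_zero hyx.1 hyx.2.1 hyx.2.2).symm
  rw [edgeFlow_eq_zero hxy, edgeFlow_eq_zero hyx]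

end Reversibility

theorem multinomial_reversible_model_two_general {V : Type*} [Fintype V] [DecidableEq V]
    (G : SimpleGraph V) [DecidableRel G.Adj] (M : ℕ)
    (ξ ξ' : V → ℕ) :
    piMulti G ξ * pTwo G M ξ ξ' = piMulti G ξ' * pTwo G M ξ' ξ := by
  rw [piMulti_mul_pTwo, piMulti_mul_pTwo]
  exact Fintype.sum_equiv (Equiv.prodComm V V) _ _ fun e => edgeFlow_swap

/-- The multinomial distribution `π` is reversible (hence stationary) for the Model 2
Markov chain: `π(ξ)p(ξ,ξ') = π(ξ')p(ξ',ξ)`. -/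
theorem multinomial_reversible_model_two {V : Type*} [Fintype V] [DecidableEq V]
    (G : SimpleGraph V) [DecidableRel G.Adj] (hG : G.Connected) (M : ℕ) (hM : 1 ≤ M)
    (ξ ξ' : V → ℕ) (hξ : ∑ x, ξ x = M) (hξ' : ∑ x, ξ' x = M) :
    piMulti G ξ * pTwo G M ξ ξ' = piMulti G ξ' * pTwo G M ξ' ξ :=
  multinomial_reversible_model_two_general G M ξ ξ'
end

section
/- For the Model 1 chain on a finite connected graph with N ≥ 2 vertices and M ≥ 1 dollars, for every vertex x, every 0 ≤ d ≤ M, and every initial configuration, lim_{t→∞} P(ξ_t(x) = d) = C(M+N−d−2, N−2) / C(M+N−1, N−1). -/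
/-!
Every move of Model 1 is undone by the reverse move along the same edge, so the chain is
symmetric and its transition matrix on `𝒜_{N,M}` is doubly stochastic. Walking the dollars one
at a time to a fixed vertex `v` connects every configuration with `M • δ_v`, and that configuration
has a holding step (an edge leaving an empty vertex), so the matrix is primitive. Doeblin's
contraction on vectors of sum zero then sends every entry of `P ^ t` to `1 / |𝒜_{N,M}|`, and the
limit is a count: `|𝒜_{N,M}| = C(M+N-1, N-1)` by stars and bars, and fixing `ξ x = d` leaves the
configurations of `M - d` dollars on the other `N - 1` vertices.
-/

open Filter

/-- The state space `𝒜_{N,M}` of configurations with `M` dollars, as a finite set. -/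
def stateSpace (V : Type*) [Fintype V] [DecidableEq V] (M : ℕ) : Finset (V → ℕ) :=
  (Fintype.piFinset fun _ : V => Finset.range (M + 1)).filter fun ξ => ∑ x, ξ x = M

/-- Model 1 transition probabilities: an oriented edge `(x,y)` is chosen uniformly among
the `2|E|` oriented edges and one dollar moves from `x` to `y` if possible. -/
noncomputable def pOne {V : Type*} [Fintype V] [DecidableEq V] (G : SimpleGraph V)
    [DecidableRel G.Adj] (ξ ξ' : V → ℕ) : ℝ :=
  ((Finset.univ.filter fun e : V × V => G.Adj e.1 e.2 ∧ moveDollar ξ e.1 e.2 = ξ').card : ℝ)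
    / ((Finset.univ.filter fun e : V × V => G.Adj e.1 e.2).card : ℝ)

/-- `t`-step transition probabilities of Model 1. -/
noncomputable def pOneIter {V : Type*} [Fintype V] [DecidableEq V] (G : SimpleGraph V)
    [DecidableRel G.Adj] (M : ℕ) : ℕ → (V → ℕ) → (V → ℕ) → ℝ
  | 0, ξ, ξ' => if ξ = ξ' then 1 else 0
  | t + 1, ξ, ξ' => ∑ η ∈ stateSpace V M, pOneIter G M t ξ η * pOne G η ξ'

open Topology Relation

theorem abs_sum_mul_le_sum_mul_norm {n : Type*} [Fintype n] {w v : n → ℝ} (hw : ∀ j, 0 ≤ w j) :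
    |∑ j, w j * v j| ≤ (∑ j, w j) * ‖v‖ :=
  calc |∑ j, w j * v j| ≤ ∑ j, w j * |v j| := by
        refine (Finset.abs_sum_le_sum_abs _ _).trans_eq ?_
        simp_rw [abs_mul, abs_of_nonneg (hw _)]
    _ ≤ ∑ j, w j * ‖v‖ := by
        gcongr with j; exacts [hw j, norm_le_pi_norm v j]
    _ = (∑ j, w j) * ‖v‖ := (Finset.sum_mul ..).symm

theorem Relation.ReflTransGen.subtype_mk {α : Type*} {p : α → Prop} {r : α → α → Prop}
    (hr : ∀ a b, r a b → p a → p b) {a b : α} (h : ReflTransGen r a b) (ha : p a) (hb : p b) :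
    ReflTransGen (fun x y : Subtype p => r x y) ⟨a, ha⟩ ⟨b, hb⟩ := by
  induction h using Relation.ReflTransGen.head_induction_on with
  | refl => rfl
  | head hac _ ih => exact .head hac (ih (hr _ _ hac ha))

namespace Matrix

variable {n : Type*} [Fintype n] [DecidableEq n] {A P Q : Matrix n n ℝ}

theorem mem_rowStochastic_of_mem_doublyStochastic (hP : P ∈ doublyStochastic ℝ n) :
    P ∈ rowStochastic ℝ n :=
  (mem_doublyStochastic_iff_mem_rowStochastic_and_mem_colStochastic.1 hP).1

theorem norm_mulVec_le_of_mem_rowStochastic (hQ : Q ∈ rowStochastic ℝ n) (v : n → ℝ) :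
    ‖Q *ᵥ v‖ ≤ ‖v‖ :=
  (pi_norm_le_iff_of_nonneg (norm_nonneg v)).2 fun i => by
    simpa [mulVec, dotProduct, sum_row_of_mem_rowStochastic hQ] using
      abs_sum_mul_le_sum_mul_norm (v := v) fun j => nonneg_of_mem_rowStochastic hQ (i := i) (j := j)

theorem card_mul_le_one_of_mem_rowStochastic (hQ : Q ∈ rowStochastic ℝ n) {ε : ℝ}
    (hε : ∀ i j, ε ≤ Q i j) : Fintype.card n * ε ≤ 1 := by
  rcases isEmpty_or_nonempty n with hn | ⟨⟨i⟩⟩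
  · simp
  calc Fintype.card n * ε = ∑ _j : n, ε := by simp
    _ ≤ ∑ j, Q i j := Finset.sum_le_sum fun j _ => hε i j
    _ = 1 := sum_row_of_mem_rowStochastic hQ i

/-- Doeblin's contraction: as `∑ v = 0`, lowering every entry of `Q` by `ε` does not change
`Q *ᵥ v`. -/
theorem norm_mulVec_le_of_sum_eq_zero (hQ : Q ∈ rowStochastic ℝ n) {ε : ℝ}
    (hε : ∀ i j, ε ≤ Q i j) {v : n → ℝ} (hv : ∑ j, v j = 0) :
    ‖Q *ᵥ v‖ ≤ (1 - Fintype.card n * ε) * ‖v‖ := by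
  have hθ := sub_nonneg.2 (card_mul_le_one_of_mem_rowStochastic hQ hε)
  refine (pi_norm_le_iff_of_nonneg (by positivity)).2 fun i => ?_
  have hshift : (Q *ᵥ v) i = ∑ j, (Q i j - ε) * v j := by
    simp [mulVec, dotProduct, sub_mul, Finset.sum_sub_distrib, ← Finset.mul_sum, hv]
  have hsum : ∑ j, (Q i j - ε) = 1 - Fintype.card n * ε := by
    simp [Finset.sum_sub_distrib, sum_row_of_mem_rowStochastic hQ]
  rw [Real.norm_eq_abs, hshift, ← hsum]
  exact abs_sum_mul_le_sum_mul_norm fun j => sub_nonneg.2 (hε i j)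

theorem norm_pow_mulVec_le (hP : P ∈ doublyStochastic ℝ n) {t₀ : ℕ} (ht₀ : 0 < t₀) {ε : ℝ}
    (hε : ∀ i j, ε ≤ (P ^ t₀) i j) {v : n → ℝ} (hv : ∑ j, v j = 0) (t : ℕ) :
    ‖(P ^ t) *ᵥ v‖ ≤ (1 - Fintype.card n * ε) ^ (t / t₀) * ‖v‖ := by
  have hrow : ∀ t, P ^ t ∈ rowStochastic ℝ n := fun t =>
    mem_rowStochastic_of_mem_doublyStochastic (pow_mem hP t)
  induction t using Nat.strong_induction_on with
  | _ t ih =>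
  rcases lt_or_ge t t₀ with ht | ht
  · simpa [Nat.div_eq_of_lt ht] using norm_mulVec_le_of_mem_rowStochastic (hrow t) v
  have hsplit : (P ^ t) *ᵥ v = (P ^ t₀) *ᵥ ((P ^ (t - t₀)) *ᵥ v) := by
    rw [mulVec_mulVec, ← pow_add, Nat.add_sub_cancel' ht]
  have hsum : ∑ j, ((P ^ (t - t₀)) *ᵥ v) j = 0 := by
    rw [sum_mulVec_of_mem_doublyStochastic (pow_mem hP _), hv]
  have hθ := sub_nonneg.2 (card_mul_le_one_of_mem_rowStochastic (hrow t₀) hε)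
  rw [hsplit, Nat.div_eq_sub_div ht₀ ht, pow_succ', mul_assoc]
  exact (norm_mulVec_le_of_sum_eq_zero (hrow t₀) hε hsum).trans
    (mul_le_mul_of_nonneg_left (ih _ (by omega)) hθ)

theorem tendsto_pow_apply_of_mem_doublyStochastic (hP : P ∈ doublyStochastic ℝ n)
    (hprim : P.IsPrimitive) (i j : n) :
    Tendsto (fun t => (P ^ t) i j) atTop (𝓝 (Fintype.card n : ℝ)⁻¹) := by
  obtain ⟨t₀, ht₀, hpos⟩ := hprim.exists_pos_pow
  have : Nonempty n := ⟨i⟩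
  obtain ⟨⟨i₀, j₀⟩, hmin⟩ := Finite.exists_min fun p : n × n => (P ^ t₀) p.1 p.2
  set ε := (P ^ t₀) i₀ j₀
  have hθ : 1 - Fintype.card n * ε < 1 :=
    sub_lt_self 1 (mul_pos (Nat.cast_pos.2 Fintype.card_pos) (hpos i₀ j₀))
  have hθ0 := sub_nonneg.2 (card_mul_le_one_of_mem_rowStochastic
    (mem_rowStochastic_of_mem_doublyStochastic (pow_mem hP t₀)) fun i j => hmin (i, j))
  set u : n → ℝ := Pi.single j 1 - (Fintype.card n : ℝ)⁻¹ • 1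
  have hu : ∑ k, u k = 0 := by simp [u, Finset.sum_sub_distrib]
  have happly : ∀ t, (P ^ t) i j - (Fintype.card n : ℝ)⁻¹ = ((P ^ t) *ᵥ u) i := fun t => by
    simp [u, mulVec_sub, mulVec_smul, mulVec_one_of_mem_doublyStochastic (pow_mem hP t)]
  have hgeom : Tendsto (fun t => (1 - Fintype.card n * ε) ^ (t / t₀) * ‖u‖) atTop (𝓝 0) := by
    simpa using ((tendsto_pow_atTop_nhds_zero_of_lt_one hθ0 hθ).comp
      (Nat.tendsto_div_const_atTop ht₀.ne')).mul_const ‖u‖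
  refine tendsto_sub_nhds_zero_iff.1 (squeeze_zero_norm (fun t => ?_) hgeom)
  rw [happly]
  exact (norm_le_pi_norm _ i).trans (norm_pow_mulVec_le hP ht₀ (fun i j => hmin (i, j)) hu t)

theorem pow_add_apply_pos (hA : ∀ i j, 0 ≤ A i j) {s t : ℕ} {i k j : n}
    (h₁ : 0 < (A ^ s) i k) (h₂ : 0 < (A ^ t) k j) : 0 < (A ^ (s + t)) i j := by
  rw [pow_add, mul_apply]
  exact (mul_pos h₁ h₂).trans_le <| Finset.single_le_sum
    (f := fun l => (A ^ s) i l * (A ^ t) l j)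
    (fun l _ => mul_nonneg (pow_apply_nonneg hA s i l) (pow_apply_nonneg hA t l j))
    (Finset.mem_univ k)

theorem exists_pow_apply_pos_of_reflTransGen (hA : ∀ i j, 0 ≤ A i j) {i j : n}
    (h : ReflTransGen (fun i j => 0 < A i j) i j) : ∃ k, 0 < (A ^ k) i j := by
  induction h with
  | refl => exact ⟨0, by simp⟩
  | tail _ hbc ih =>
    obtain ⟨k, hk⟩ := ih
    exact ⟨k + 1, pow_add_apply_pos hA hk (by rwa [pow_one])⟩

/-- Paths to and from `c` can be padded with loops at `c` to any common large length. -/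
theorem isPrimitive_of_reflTransGen (hA : ∀ i j, 0 ≤ A i j) {c : n} (hc : 0 < A c c)
    (hto : ∀ i, ReflTransGen (fun i j => 0 < A i j) i c)
    (hfrom : ∀ j, ReflTransGen (fun i j => 0 < A i j) c j) : A.IsPrimitive := by
  have hloop : ∀ k, 0 < (A ^ k) c c := fun k => by
    induction k with
    | zero => simp
    | succ k ih => exact pow_add_apply_pos hA ih (by rwa [pow_one])
  have hto' : ∀ i, ∀ᶠ k in atTop, 0 < (A ^ k) i c := fun i => by
    obtain ⟨s, hs⟩ := exists_pow_apply_pos_of_reflTransGen hA (hto i)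
    refine eventually_atTop.2 ⟨s, fun k hk => ?_⟩
    simpa [Nat.add_sub_cancel' hk] using pow_add_apply_pos hA hs (hloop (k - s))
  have hfrom' : ∀ j, ∀ᶠ k in atTop, 0 < (A ^ k) c j := fun j => by
    obtain ⟨s, hs⟩ := exists_pow_apply_pos_of_reflTransGen hA (hfrom j)
    refine eventually_atTop.2 ⟨s, fun k hk => ?_⟩
    simpa [Nat.sub_add_cancel hk] using pow_add_apply_pos hA (hloop (k - s)) hs
  obtain ⟨T, hT⟩ := eventually_atTop.1 ((eventually_all.2 hto').and (eventually_all.2 hfrom'))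
  exact ⟨hA, T + 1 + (T + 1), by omega,
    fun i j => pow_add_apply_pos hA ((hT _ (by omega)).1 i) ((hT _ (by omega)).2 j)⟩

end Matrix

section MoveDollar

variable {V : Type*} [DecidableEq V]

theorem moveDollar_self (ξ : V → ℕ) (a : V) : moveDollar ξ a a = ξ := by
  funext z; simp only [moveDollar]; split_ifs <;> subst_vars <;> omega

theorem moveDollar_of_eq_zero {ξ : V → ℕ} {a : V} (ha : ξ a = 0) (b : V) :
    moveDollar ξ a b = ξ := by
  funext z; simp [moveDollar, ha]

theorem moveDollar_moveDollar {ξ : V → ℕ} {a : V} (ha : ξ a ≠ 0) (c b : V) :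
    moveDollar (moveDollar ξ a c) c b = moveDollar ξ a b := by
  funext z; simp only [moveDollar]; split_ifs <;> simp_all

theorem moveDollar_moveDollar_swap {ξ : V → ℕ} {a b : V} (hξ : moveDollar ξ a b ≠ ξ) :
    moveDollar (moveDollar ξ a b) b a = ξ := by
  have ha : ξ a ≠ 0 := fun ha => hξ (moveDollar_of_eq_zero ha b)
  rw [moveDollar_moveDollar ha, moveDollar_self]

variable [Fintype V]

theorem sum_moveDollar (ξ : V → ℕ) (a b : V) : ∑ z, moveDollar ξ a b z = ∑ z, ξ z := by
  by_cases ha : ξ a = 0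
  · rw [moveDollar_of_eq_zero ha]
  have h : ∀ z, moveDollar ξ a b z + (if z = a then 1 else 0) = ξ z + (if z = b then 1 else 0) := by
    intro z; simp only [moveDollar, if_neg ha]; split_ifs <;> simp_all <;> omega
  simpa [Finset.sum_add_distrib] using congrArg (fun f : V → ℕ => ∑ z, f z) (funext h)

theorem mem_stateSpace {M : ℕ} {ξ : V → ℕ} : ξ ∈ stateSpace V M ↔ ∑ z, ξ z = M := by
  refine ⟨fun h => (Finset.mem_filter.1 h).2, fun h => Finset.mem_filter.2 ⟨?_, h⟩⟩
  refine Fintype.mem_piFinset.2 fun z => Finset.mem_range_succ_iff.2 ?_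
  exact h ▸ Finset.single_le_sum (fun _ _ => Nat.zero_le _) (Finset.mem_univ z)

theorem moveDollar_mem_stateSpace {M : ℕ} {ξ : V → ℕ} (hξ : ξ ∈ stateSpace V M) (a b : V) :
    moveDollar ξ a b ∈ stateSpace V M := by
  rw [mem_stateSpace, sum_moveDollar]; exact mem_stateSpace.1 hξ

end MoveDollar

section Model

variable {V : Type*} [Fintype V] [DecidableEq V] {G : SimpleGraph V} [DecidableRel G.Adj]
  {M : ℕ}

theorem pOne_nonneg (ξ η : V → ℕ) : 0 ≤ pOne G ξ η := by
  unfold pOne; positivity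

theorem pOne_pos_of_adj {a b : V} (hab : G.Adj a b) (ξ : V → ℕ) :
    0 < pOne G ξ (moveDollar ξ a b) := by
  unfold pOne
  refine div_pos ?_ ?_ <;> exact_mod_cast Finset.card_pos.2 ⟨(a, b), by simp [hab]⟩

theorem exists_adj_of_pOne_pos {ξ η : V → ℕ} (h : 0 < pOne G ξ η) :
    ∃ a b, G.Adj a b ∧ moveDollar ξ a b = η := by
  by_contra! hne
  have : (Finset.univ.filter fun e : V × V => G.Adj e.1 e.2 ∧ moveDollar ξ e.1 e.2 = η) = ∅ :=
    Finset.filter_eq_empty_iff.2 fun e _ he => hne e.1 e.2 he.1 he.2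
  simp [pOne, this] at h

theorem pOne_comm (ξ η : V → ℕ) : pOne G ξ η = pOne G η ξ := by
  by_cases h : ξ = η
  · rw [h]
  have hswap : ∀ {ξ η : V → ℕ}, ξ ≠ η → ∀ e : V × V, G.Adj e.1 e.2 ∧ moveDollar ξ e.1 e.2 = η →
      G.Adj e.2 e.1 ∧ moveDollar η e.2 e.1 = ξ := by
    rintro ξ _ h ⟨a, b⟩ ⟨hab, rfl⟩
    exact ⟨hab.symm, moveDollar_moveDollar_swap (Ne.symm h)⟩
  unfold pOne
  congr 2
  exact Finset.card_nbij' Prod.swap Prod.swap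
    (fun e he => by simpa using hswap h e (by simpa using he))
    (fun e he => by simpa using hswap (Ne.symm h) e (by simpa using he))
    (fun _ _ => rfl) (fun _ _ => rfl)

theorem sum_pOne (hE : ∃ a b, G.Adj a b) {ξ : V → ℕ} (hξ : ξ ∈ stateSpace V M) :
    ∑ η ∈ stateSpace V M, pOne G ξ η = 1 := by
  obtain ⟨a, b, hab⟩ := hE
  set E := Finset.univ.filter fun e : V × V => G.Adj e.1 e.2
  have hE : (0 : ℝ) < E.card := by exact_mod_cast Finset.card_pos.2 ⟨(a, b), by simp [E, hab]⟩
  have hfiber : ∑ η ∈ stateSpace V M, (E.filter fun e => moveDollar ξ e.1 e.2 = η).card = E.card :=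
    (Finset.card_eq_sum_card_fiberwise fun e _ => moveDollar_mem_stateSpace hξ e.1 e.2).symm
  simp only [Finset.filter_filter, E] at hfiber
  simp only [pOne, ← Finset.sum_div]
  rw [div_eq_one_iff_eq hE.ne']
  exact_mod_cast hfiber

noncomputable def transitionMatrix (G : SimpleGraph V) [DecidableRel G.Adj] (M : ℕ) :
    Matrix (stateSpace V M) (stateSpace V M) ℝ :=
  fun ξ η => pOne G ξ η

theorem transitionMatrix_mem_doublyStochastic (hE : ∃ a b, G.Adj a b) :
    transitionMatrix G M ∈ doublyStochastic ℝ (stateSpace V M) := by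
  refine mem_doublyStochastic_iff_sum.2 ⟨fun ξ η => pOne_nonneg _ _, fun ξ => ?_, fun η => ?_⟩
  · exact (Finset.sum_coe_sort _ (pOne G ξ)).trans (sum_pOne hE ξ.2)
  · simp only [transitionMatrix, pOne_comm _ (η : V → ℕ)]
    exact (Finset.sum_coe_sort _ (pOne G η)).trans (sum_pOne hE η.2)

theorem pOneIter_eq_pow_apply {ξ η : V → ℕ} (hξ : ξ ∈ stateSpace V M)
    (hη : η ∈ stateSpace V M) (t : ℕ) :
    pOneIter G M t ξ η = (transitionMatrix G M ^ t) ⟨ξ, hξ⟩ ⟨η, hη⟩ := by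
  induction t generalizing η with
  | zero => simp [pOneIter, Matrix.one_apply]
  | succ t ih =>
    rw [pOneIter, pow_succ, Matrix.mul_apply, ← Finset.sum_coe_sort]
    exact Finset.sum_congr rfl fun ζ _ => by rw [ih ζ.2]; rfl

theorem reflTransGen_moveDollar_of_walk {a b : V} (w : G.Walk a b) (ξ : V → ℕ) :
    ReflTransGen (fun ξ η => 0 < pOne G ξ η) ξ (moveDollar ξ a b) := by
  induction w generalizing ξ with
  | nil => rw [moveDollar_self]
  | @cons a c b hac w ih =>
    by_cases ha : ξ a = 0
    · rw [moveDollar_of_eq_zero ha]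
    · exact .head (pOne_pos_of_adj hac ξ) (moveDollar_moveDollar ha c b ▸ ih _)

theorem reflTransGen_single (hG : G.Preconnected) (v : V) {ξ : V → ℕ}
    (hξ : ξ ∈ stateSpace V M) :
    ReflTransGen (fun ξ η => 0 < pOne G ξ η) ξ (Pi.single v M) := by
  obtain ⟨k, hk⟩ : ∃ k, M - ξ v = k := ⟨_, rfl⟩
  induction k generalizing ξ with
  | zero =>
    have hsum := (Finset.add_sum_erase _ ξ (Finset.mem_univ v)).trans (mem_stateSpace.1 hξ)
    have hrest := Finset.sum_eq_zero_iff.1 (show ∑ z ∈ Finset.univ.erase v, ξ z = 0 by omega)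
    convert ReflTransGen.refl
    funext z
    by_cases hz : z = v
    · subst hz; simp; omega
    · simp [hz, hrest z (Finset.mem_erase.2 ⟨hz, Finset.mem_univ z⟩)]
  | succ k ih =>
    have hsum := (Finset.add_sum_erase _ ξ (Finset.mem_univ v)).trans (mem_stateSpace.1 hξ)
    obtain ⟨z, hz, hξz⟩ := Finset.exists_ne_zero_of_sum_ne_zero
      (show ∑ z ∈ Finset.univ.erase v, ξ z ≠ 0 by omega)
    have hzv := (Finset.mem_erase.1 hz).1
    obtain ⟨w⟩ := hG z v
    have hv : moveDollar ξ z v v = ξ v + 1 := by simp [moveDollar, hξz, Ne.symm hzv]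
    exact (reflTransGen_moveDollar_of_walk w ξ).trans
      (ih (moveDollar_mem_stateSpace hξ z v) (by omega))

theorem transitionMatrix_isPrimitive [Nontrivial V] (hG : G.Connected) :
    (transitionMatrix G M).IsPrimitive := by
  obtain ⟨u, v, hu⟩ := exists_pair_ne V
  obtain ⟨w, hadj⟩ := hG.preconnected.exists_adj_of_nontrivial u
  have hP := transitionMatrix_mem_doublyStochastic (M := M) ⟨_, _, hadj⟩
  let c : stateSpace V M := ⟨Pi.single v M, mem_stateSpace.2 (by simp)⟩
  have hto : ∀ ξ, ReflTransGen (fun ξ η => 0 < transitionMatrix G M ξ η) ξ c := fun ξ =>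
    (reflTransGen_single hG.preconnected v ξ.2).subtype_mk (fun ξ _ h hξ => by
      obtain ⟨a, b, -, rfl⟩ := exists_adj_of_pOne_pos h
      exact moveDollar_mem_stateSpace hξ a b) ξ.2 c.2
  refine Matrix.isPrimitive_of_reflTransGen (fun _ _ => nonneg_of_mem_doublyStochastic hP)
    (c := c) ?_ hto fun ξ => ReflTransGen.mono (fun _ _ h => ?_) _ _ (reflTransGen_swap.2 (hto ξ))
  · have hu0 : c.1 u = 0 := by simp [c, hu]
    have := pOne_pos_of_adj hadj c.1
    rwa [moveDollar_of_eq_zero hu0] at this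
  · rwa [Function.swap, transitionMatrix, pOne_comm] at h

end Model

section Counting

variable {V : Type*} [Fintype V] [DecidableEq V]

theorem card_stateSpace (M : ℕ) :
    (stateSpace V M).card = (Fintype.card V + M - 1).choose M := by
  rw [Finset.card_eq_of_equiv_fintype ((Equiv.subtypeEquivRight fun _ => mem_stateSpace).trans
    (Sym.equivNatSumOfFintype V M).symm), Sym.card_sym_eq_choose]

theorem card_filter_stateSpace_apply_eq {M d : ℕ} (x : V) (hd : d ≤ M) :
    ((stateSpace V M).filter fun ξ => ξ x = d).card = (stateSpace {y // y ≠ x} (M - d)).card := by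
  refine Finset.card_nbij' (fun ξ y => ξ y) (fun η z => if h : z = x then d else η ⟨z, h⟩)
    (fun ξ hξ => ?_) (fun η hη => ?_) (fun ξ hξ => ?_) (fun η _ => ?_)
  · simp only [Finset.mem_coe, Finset.mem_filter, mem_stateSpace] at hξ ⊢
    have := Fintype.sum_eq_add_sum_subtype_ne ξ x
    omega
  · simp only [Finset.mem_coe, Finset.mem_filter, mem_stateSpace] at hη ⊢
    have := Fintype.sum_eq_add_sum_subtype_ne (fun z => if h : z = x then d else η ⟨z, h⟩) x
    have hrest : ∑ y : {y // y ≠ x}, (if h : (y : V) = x then d else η ⟨y, h⟩) = ∑ y, η y :=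
      Finset.sum_congr rfl fun y _ => dif_neg y.2
    simp only [dite_true, and_true] at this ⊢
    omega
  · funext z
    by_cases hz : z = x <;> simp_all
  · funext y
    simp [y.2]

end Counting

theorem model_one_money_distribution_general {V : Type*} [Fintype V] [DecidableEq V]
    (G : SimpleGraph V) [DecidableRel G.Adj] (hG : G.Connected)
    (N M : ℕ) (hV : Fintype.card V = N) (hN : 2 ≤ N)
    (x : V) (d : ℕ) (hd : d ≤ M) (ξ₀ : V → ℕ) (hξ₀ : ξ₀ ∈ stateSpace V M) :
    Tendsto
      (fun t : ℕ => ∑ ξ ∈ (stateSpace V M).filter (fun ξ => ξ x = d), pOneIter G M t ξ₀ ξ)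
      atTop
      (nhds (((M + N - d - 2).choose (N - 2) : ℝ) / ((M + N - 1).choose (N - 1) : ℝ))) := by
  have : Nontrivial V := Fintype.one_lt_card_iff_nontrivial.1 (by omega)
  have hlim : ∀ ξ ∈ stateSpace V M,
      Tendsto (fun t => pOneIter G M t ξ₀ ξ) atTop (𝓝 ((stateSpace V M).card : ℝ)⁻¹) :=
    fun ξ hξ => by
      simpa [pOneIter_eq_pow_apply hξ₀ hξ] using Matrix.tendsto_pow_apply_of_mem_doublyStochastic
        (transitionMatrix_mem_doublyStochastic ⟨x, hG.preconnected.exists_adj_of_nontrivial x⟩)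
        (transitionMatrix_isPrimitive hG) ⟨ξ₀, hξ₀⟩ ⟨ξ, hξ⟩
  convert tendsto_finsetSum _ fun ξ hξ => hlim ξ (Finset.mem_filter.1 hξ).1 using 2
  have hS : (stateSpace V M).card = (M + N - 1).choose (N - 1) := by
    rw [card_stateSpace, hV, show N + M - 1 = M + (N - 1) by omega, Nat.choose_symm_add,
      show M + (N - 1) = M + N - 1 by omega]
  have hF : ((stateSpace V M).filter fun ξ => ξ x = d).card = (M + N - d - 2).choose (N - 2) := by
    rw [card_filter_stateSpace_apply_eq x hd, card_stateSpace, Fintype.card_subtype_compl,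
      Fintype.card_subtype_eq, hV, show N - 1 + (M - d) - 1 = M - d + (N - 2) by omega,
      Nat.choose_symm_add, show M - d + (N - 2) = M + N - d - 2 by omega]
  rw [Finset.sum_const, nsmul_eq_mul, hF, hS, div_eq_mul_inv]

/-- For Model 1 on a finite connected graph with `N ≥ 2` vertices and `M ≥ 1` dollars,
for every vertex `x`, every `0 ≤ d ≤ M` and every initial configuration,
`P(ξ_t(x) = d) → C(M+N−d−2, N−2) / C(M+N−1, N−1)` as `t → ∞`. -/
theorem model_one_money_distribution {V : Type*} [Fintype V] [DecidableEq V]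
    (G : SimpleGraph V) [DecidableRel G.Adj] (hG : G.Connected)
    (N M : ℕ) (hV : Fintype.card V = N) (hN : 2 ≤ N) (hM : 1 ≤ M)
    (x : V) (d : ℕ) (hd : d ≤ M) (ξ₀ : V → ℕ) (hξ₀ : ξ₀ ∈ stateSpace V M) :
    Tendsto
      (fun t : ℕ => ∑ ξ ∈ (stateSpace V M).filter (fun ξ => ξ x = d), pOneIter G M t ξ₀ ξ)
      atTop
      (nhds (((M + N - d - 2).choose (N - 2) : ℝ) / ((M + N - 1).choose (N - 1) : ℝ))) :=
  model_one_money_distribution_general G hG N M hV hN x d hd ξ₀ hξ₀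
end
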